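/- Well-definedness of the scaling factor β_σ: if there exists a feasible θ ∈ ℝ^r (i.e., ‖θ‖² ≤ Γ_f² and (y − Aᵀθ)ᵀ P_j (y − Aᵀθ) ≤ Γ_{w,j}² for all j), then for every σ ∈ ℝ^{n_con} with all σ_j > 0 one has yᵀ K̂_σ⁻¹ y ≤ Γ_f² + Σ_{j=1}^{n_con} Γ_{w,j}²/σ_j², so the argument of the square root defining β_σ is nonnegative. If a strictly feasible θ exists, the inequality is strict and β_σ > 0. -/

import Mathlib

open Matrix

/-- Aggregated noise-shape matrix `P_σ := ∑ j σ_j⁻² P_j`. -/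
noncomputable def Pagg {N n_con : ℕ} (P : Fin n_con → Matrix (Fin N) (Fin N) ℝ)
    (σ : Fin n_con → ℝ) : Matrix (Fin N) (Fin N) ℝ :=
  ∑ j, ((σ j) ^ 2)⁻¹ • P j

/-- Gram matrix `K̂_σ := AᵀA + P_σ⁻¹`. -/
noncomputable def Khat {r N n_con : ℕ} (A : Matrix (Fin r) (Fin N) ℝ)
    (P : Fin n_con → Matrix (Fin N) (Fin N) ℝ) (σ : Fin n_con → ℝ) :
    Matrix (Fin N) (Fin N) ℝ :=
  Aᵀ * A + (Pagg P σ)⁻¹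

/-- Posterior-mean coefficient vector `θ^μ_σ := A K̂_σ⁻¹ y`. -/
noncomputable def θmean {r N n_con : ℕ} (A : Matrix (Fin r) (Fin N) ℝ) (y : Fin N → ℝ)
    (P : Fin n_con → Matrix (Fin N) (Fin N) ℝ) (σ : Fin n_con → ℝ) : Fin r → ℝ :=
  A *ᵥ ((Khat A P σ)⁻¹ *ᵥ y)

/-- Shape matrix `S_σ := I_r + A P_σ Aᵀ`. -/
noncomputable def Smat {r N n_con : ℕ} (A : Matrix (Fin r) (Fin N) ℝ)
    (P : Fin n_con → Matrix (Fin N) (Fin N) ℝ) (σ : Fin n_con → ℝ) :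
    Matrix (Fin r) (Fin r) ℝ :=
  1 + A * Pagg P σ * Aᵀ

/-- Scaling factor `β_σ := √(Γ_f² + ∑ j Γ_{w,j}²/σ_j² − yᵀ K̂_σ⁻¹ y)`. -/
noncomputable def βfac {r N n_con : ℕ} (A : Matrix (Fin r) (Fin N) ℝ) (y : Fin N → ℝ)
    (Γf : ℝ) (Γw : Fin n_con → ℝ) (P : Fin n_con → Matrix (Fin N) (Fin N) ℝ)
    (σ : Fin n_con → ℝ) : ℝ :=
  Real.sqrt (Γf ^ 2 + ∑ j, (Γw j) ^ 2 / (σ j) ^ 2 - y ⬝ᵥ ((Khat A P σ)⁻¹ *ᵥ y))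

/-- The GP-type dual function `F(σ) := qᵀθ^μ_σ + β_σ √(qᵀ S_σ⁻¹ q)`. -/
noncomputable def dualF {r N n_con : ℕ} (A : Matrix (Fin r) (Fin N) ℝ) (y : Fin N → ℝ)
    (q : Fin r → ℝ) (Γf : ℝ) (Γw : Fin n_con → ℝ)
    (P : Fin n_con → Matrix (Fin N) (Fin N) ℝ) (σ : Fin n_con → ℝ) : ℝ :=
  q ⬝ᵥ θmean A y P σ + βfac A y Γf Γw P σ * Real.sqrt (q ⬝ᵥ ((Smat A P σ)⁻¹ *ᵥ q))

/-!
Write `K = AᵀA + W⁻¹` with `W = P_σ`. Completing the square, the quadratic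
`q(θ) = ‖θ‖² + (y - Aᵀθ)ᵀ W (y - Aᵀθ)` equals `yᵀK⁻¹y + dᵀ(I + AWAᵀ)d` with `d = θ - AK⁻¹y`,
so `yᵀK⁻¹y` is the minimum of `q`. For a feasible `θ`, `q(θ) ≤ Γ_f² + ∑ Γ_{w,j}²/σ_j²`,
and strictly so for a strictly feasible `θ`.
-/

namespace Matrix

variable {m n ι : Type*} [Fintype m] [Fintype n] [Fintype ι]

theorem dotProduct_sum_smul_mulVec (P : ι → Matrix n n ℝ) (c : ι → ℝ) (x : n → ℝ) :
    x ⬝ᵥ ((∑ j, c j • P j) *ᵥ x) = ∑ j, c j * (x ⬝ᵥ (P j *ᵥ x)) := by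
  simp only [sum_mulVec, dotProduct_sum, smul_mulVec, dotProduct_smul, smul_eq_mul]

theorem posDef_sum_smul {P : ι → Matrix n n ℝ} (hP : ∀ j, (P j).PosSemidef)
    (hsum : (∑ j, P j).PosDef) {c : ι → ℝ} (hc : ∀ j, 0 < c j) :
    (∑ j, c j • P j).PosDef := by
  refine .of_dotProduct_mulVec_pos
    (posSemidef_sum _ fun j _ => (hP j).smul (hc j).le).isHermitian fun x hx => ?_
  have hpos : ∑ _j : ι, (0 : ℝ) < ∑ j, x ⬝ᵥ (P j *ᵥ x) := by
    simpa [sum_mulVec, dotProduct_sum] using hsum.dotProduct_mulVec_pos hx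
  obtain ⟨j, -, hj⟩ := Finset.exists_lt_of_sum_lt hpos
  rw [star_trivial, dotProduct_sum_smul_mulVec]
  refine Finset.sum_pos' (fun i _ => mul_nonneg (hc i).le ?_)
    ⟨j, Finset.mem_univ j, mul_pos (hc j) hj⟩
  simpa using (hP i).dotProduct_mulVec_nonneg x

variable [DecidableEq n]

theorem dotProduct_self_add_dotProduct_mulVec_eq {A : Matrix m n ℝ} {W : Matrix n n ℝ}
    (hW : W.IsSymm) (hWdet : IsUnit W.det) (hKdet : IsUnit (Aᵀ * A + W⁻¹).det)
    (y : n → ℝ) (θ : m → ℝ) :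
    let d := θ - A *ᵥ ((Aᵀ * A + W⁻¹)⁻¹ *ᵥ y)
    θ ⬝ᵥ θ + (y - Aᵀ *ᵥ θ) ⬝ᵥ (W *ᵥ (y - Aᵀ *ᵥ θ)) =
      y ⬝ᵥ ((Aᵀ * A + W⁻¹)⁻¹ *ᵥ y) + d ⬝ᵥ d + (Aᵀ *ᵥ d) ⬝ᵥ (W *ᵥ (Aᵀ *ᵥ d)) := by
  intro d
  set x := (Aᵀ * A + W⁻¹)⁻¹ *ᵥ y
  set u := A *ᵥ x
  set v := W⁻¹ *ᵥ x
  set e := Aᵀ *ᵥ d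
  have hWv : W *ᵥ v = x := by rw [mulVec_mulVec, mul_nonsing_inv _ hWdet, one_mulVec]
  have hy : y = Aᵀ *ᵥ u + v := by
    calc y = (Aᵀ * A + W⁻¹) *ᵥ x := by rw [mulVec_mulVec, mul_nonsing_inv _ hKdet, one_mulVec]
      _ = Aᵀ *ᵥ u + v := by rw [add_mulVec, ← mulVec_mulVec]
  have hθ : θ = u + d := by simp only [d, u]; abel
  have hres : y - Aᵀ *ᵥ θ = v - e := by rw [hy, hθ, mulVec_add]; abel
  have htrans (w : m → ℝ) : (Aᵀ *ᵥ w) ⬝ᵥ x = w ⬝ᵥ u := by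
    rw [mulVec_transpose, ← dotProduct_mulVec]
  have hex : e ⬝ᵥ x = u ⬝ᵥ d := by rw [htrans, dotProduct_comm]
  have hcross : v ⬝ᵥ (W *ᵥ e) = u ⬝ᵥ d := by
    rw [dotProduct_mulVec, ← mulVec_transpose, hW.eq, hWv, dotProduct_comm, hex]
  rw [hres, hθ, hy]
  simp only [mulVec_sub, dotProduct_sub, sub_dotProduct, add_dotProduct, dotProduct_add, hWv,
    hcross, hex, htrans, dotProduct_comm d u]
  ring

theorem dotProduct_inv_mulVec_le_dotProduct_self_add {A : Matrix m n ℝ} {W : Matrix n n ℝ}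
    (hW : W.PosDef) (y : n → ℝ) (θ : m → ℝ) :
    y ⬝ᵥ ((Aᵀ * A + W⁻¹)⁻¹ *ᵥ y) ≤ θ ⬝ᵥ θ + (y - Aᵀ *ᵥ θ) ⬝ᵥ (W *ᵥ (y - Aᵀ *ᵥ θ)) := by
  have hK : (Aᵀ * A + W⁻¹).PosDef := by
    simpa using PosDef.posSemidef_add (posSemidef_conjTranspose_mul_self A) hW.inv
  have hWsymm : W.IsSymm := (conjTranspose_eq_transpose_of_trivial W).symm.trans hW.isHermitian
  rw [dotProduct_self_add_dotProduct_mulVec_eq hWsymm hW.det_pos.ne'.isUnit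
    hK.det_pos.ne'.isUnit y θ]
  refine le_add_of_le_of_nonneg (le_add_of_nonneg_right ?_) ?_
  · exact Finset.sum_nonneg fun i _ => mul_self_nonneg _
  · simpa only [star_trivial] using hW.posSemidef.dotProduct_mulVec_nonneg _

end Matrix

section Gram

variable {r N n_con : ℕ} {A : Matrix (Fin r) (Fin N) ℝ}
  {P : Fin n_con → Matrix (Fin N) (Fin N) ℝ} {σ : Fin n_con → ℝ}

theorem Pagg_posDef (hP : ∀ j, (P j).PosSemidef) (hPsum : (∑ j, P j).PosDef)
    (hσ : ∀ j, 0 < σ j) : (Pagg P σ).PosDef :=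
  posDef_sum_smul hP hPsum fun j => by have := hσ j; positivity

theorem dotProduct_Khat_inv_mulVec_le (hP : ∀ j, (P j).PosSemidef) (hPsum : (∑ j, P j).PosDef)
    (hσ : ∀ j, 0 < σ j) (y : Fin N → ℝ) (θ : Fin r → ℝ) :
    y ⬝ᵥ ((Khat A P σ)⁻¹ *ᵥ y) ≤
      θ ⬝ᵥ θ + ∑ j, (σ j ^ 2)⁻¹ * ((y - Aᵀ *ᵥ θ) ⬝ᵥ (P j *ᵥ (y - Aᵀ *ᵥ θ))) := by
  simpa only [Khat, Pagg, dotProduct_sum_smul_mulVec] using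
    dotProduct_inv_mulVec_le_dotProduct_self_add (A := A) (Pagg_posDef hP hPsum hσ) y θ

theorem dotProduct_Khat_inv_mulVec_le_of_feasible (hP : ∀ j, (P j).PosSemidef)
    (hPsum : (∑ j, P j).PosDef) (hσ : ∀ j, 0 < σ j) {y : Fin N → ℝ} {Γw : Fin n_con → ℝ}
    {θ : Fin r → ℝ} (hθ : ∀ j, (y - Aᵀ *ᵥ θ) ⬝ᵥ (P j *ᵥ (y - Aᵀ *ᵥ θ)) ≤ Γw j ^ 2) :
    y ⬝ᵥ ((Khat A P σ)⁻¹ *ᵥ y) ≤ θ ⬝ᵥ θ + ∑ j, Γw j ^ 2 / σ j ^ 2 := by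
  refine (dotProduct_Khat_inv_mulVec_le hP hPsum hσ y θ).trans ?_
  simp_rw [div_eq_inv_mul]
  gcongr with j
  exact hθ j

end Gram

theorem beta_well_defined_general
    (r N n_con : ℕ)
    (A : Matrix (Fin r) (Fin N) ℝ) (y : Fin N → ℝ)
    (Γf : ℝ)
    (Γw : Fin n_con → ℝ)
    (P : Fin n_con → Matrix (Fin N) (Fin N) ℝ)
    (hP : ∀ j, (P j).PosSemidef)
    (hPsum : (∑ j, P j).PosDef) :
    ((∃ θ : Fin r → ℝ, θ ⬝ᵥ θ ≤ Γf ^ 2 ∧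
        ∀ j, (y - Aᵀ *ᵥ θ) ⬝ᵥ (P j *ᵥ (y - Aᵀ *ᵥ θ)) ≤ (Γw j) ^ 2) →
      ∀ σ : Fin n_con → ℝ, (∀ j, 0 < σ j) →
        y ⬝ᵥ ((Khat A P σ)⁻¹ *ᵥ y) ≤ Γf ^ 2 + ∑ j, (Γw j) ^ 2 / (σ j) ^ 2)
    ∧
    ((∃ θ : Fin r → ℝ, θ ⬝ᵥ θ < Γf ^ 2 ∧
        ∀ j, (y - Aᵀ *ᵥ θ) ⬝ᵥ (P j *ᵥ (y - Aᵀ *ᵥ θ)) < (Γw j) ^ 2) →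
      ∀ σ : Fin n_con → ℝ, (∀ j, 0 < σ j) →
        y ⬝ᵥ ((Khat A P σ)⁻¹ *ᵥ y) < Γf ^ 2 + ∑ j, (Γw j) ^ 2 / (σ j) ^ 2
        ∧ 0 < βfac A y Γf Γw P σ) := by
  refine ⟨fun ⟨θ, hθ, hres⟩ σ hσ => ?_, fun ⟨θ, hθ, hres⟩ σ hσ => ?_⟩
  · exact (dotProduct_Khat_inv_mulVec_le_of_feasible hP hPsum hσ hres).trans
      (add_le_add hθ le_rfl)
  · have hlt := (dotProduct_Khat_inv_mulVec_le_of_feasible hP hPsum hσ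
      fun j => (hres j).le).trans_lt (add_lt_add_of_lt_of_le hθ le_rfl)
    exact ⟨hlt, Real.sqrt_pos.2 (sub_pos.2 hlt)⟩

/-- Well-definedness of the scaling factor `β_σ`: feasibility implies that the argument of
the square root defining `β_σ` is nonnegative; strict feasibility makes it positive, so
`β_σ > 0`. -/
theorem beta_well_defined
    (r N n_con : ℕ) (hn : 1 ≤ n_con)
    (A : Matrix (Fin r) (Fin N) ℝ) (y : Fin N → ℝ)
    (Γf : ℝ) (hΓf : 0 < Γf)
    (Γw : Fin n_con → ℝ) (hΓw : ∀ j, 0 < Γw j)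
    (P : Fin n_con → Matrix (Fin N) (Fin N) ℝ)
    (hP : ∀ j, (P j).PosSemidef)
    (hPsum : (∑ j, P j).PosDef) :
    ((∃ θ : Fin r → ℝ, θ ⬝ᵥ θ ≤ Γf ^ 2 ∧
        ∀ j, (y - Aᵀ *ᵥ θ) ⬝ᵥ (P j *ᵥ (y - Aᵀ *ᵥ θ)) ≤ (Γw j) ^ 2) →
      ∀ σ : Fin n_con → ℝ, (∀ j, 0 < σ j) →
        y ⬝ᵥ ((Khat A P σ)⁻¹ *ᵥ y) ≤ Γf ^ 2 + ∑ j, (Γw j) ^ 2 / (σ j) ^ 2)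
    ∧
    ((∃ θ : Fin r → ℝ, θ ⬝ᵥ θ < Γf ^ 2 ∧
        ∀ j, (y - Aᵀ *ᵥ θ) ⬝ᵥ (P j *ᵥ (y - Aᵀ *ᵥ θ)) < (Γw j) ^ 2) →
      ∀ σ : Fin n_con → ℝ, (∀ j, 0 < σ j) →
        y ⬝ᵥ ((Khat A P σ)⁻¹ *ᵥ y) < Γf ^ 2 + ∑ j, (Γw j) ^ 2 / (σ j) ^ 2
        ∧ 0 < βfac A y Γf Γw P σ) :=
  beta_well_defined_general r N n_con A y Γf Γw P hP hPsum
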